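/- arXiv:2410.09458 — 4 statements merged into one kernel-verified Lean document; each statement's English description precedes it below -/
import Mathlib

section
/- With the configuration (v_1, …, v_{2m+1}) and the transformed tuple (v′_1, …, v′_{2m}) as in the context, we have Δ_ı(v′) = det(v_{m+1}, v_{m+3}, v_{m+4}, …, v_{2m+1}), where ı is the strictly increasing m-tuple with entry set {2, …, m} ∪ {m+2}. -/
/-!
Let `F` be the matrix with rows `v₂, …, v_{m+1}`, so `det F = 1`. The left-hand side is
`det F` with row `0` replaced by `w₁` and the last row by `w_{m+1}`. Since `w₁` is an exchange
vector, the three-term Plücker relation turns each minor `det ((F[0 ↦ w₁])[last ↦ y])` into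
`det (F[last ↦ v₁]) * det (F[0 ↦ y])`. For `y = v_{m+1}` the second factor has a repeated row.
For `y = v_{m+2}` the factors are `det (v₂, …, v_m, v₁)` and `det (v_{m+2}, v₃, …, v_{m+1})`:
the same cyclic rotation of the consecutive minors `det (v₁, …, v_m)` and
`det (v₃, …, v_{m+2})`, both `1`, so their product is `sign² = 1`. Expanding `w_{m+1}` linearly
leaves exactly its coefficient of `v_{m+2}`.
-/

/-- The determinant of the `m × m` matrix whose columns are `u 0, …, u (m-1)`. -/
noncomputable def cdet {m : ℕ} (u : Fin m → Fin m → ℂ) : ℂ :=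
  (Matrix.of fun i j => u j i).det

/-- `w_1 := det(v_1, v_3, v_4, …, v_{m+1}) • v_2 − v_1`. -/
noncomputable def w1 (m : ℕ) (v : ℕ → Fin m → ℂ) : Fin m → ℂ :=
  cdet (fun t : Fin m => if (t : ℕ) = 0 then v 1 else v ((t : ℕ) + 2)) • v 2 - v 1

/-- `w_{m+1} := det(v_{m+1}, v_{m+3}, v_{m+4}, …, v_{2m+1}) • v_{m+2} − v_{m+1}`. -/
noncomputable def wm1 (m : ℕ) (v : ℕ → Fin m → ℂ) : Fin m → ℂ :=
  cdet (fun t : Fin m => if (t : ℕ) = 0 then v (m + 1) else v (m + 2 + (t : ℕ))) • v (m + 2)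
    - v (m + 1)

/-- The transformed tuple `v′`:  `v′_1 := v_2`, `v′_2 := w_1`, `v′_k := v_k` for
`3 ≤ k ≤ m`, `v′_{m+1} := v_{m+2}`, `v′_{m+2} := w_{m+1}`, and `v′_k := v_k` otherwise. -/
noncomputable def vtr (m : ℕ) (v : ℕ → Fin m → ℂ) : ℕ → Fin m → ℂ := fun k =>
  if k = 1 then v 2
  else if k = 2 then w1 m v
  else if k = m + 1 then v (m + 2)
  else if k = m + 2 then wm1 m v
  else v k

namespace Matrix

variable {n R : Type*} [Fintype n] [DecidableEq n] [CommRing R]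

theorem det_smul_eq_sum_det_updateRow_smul (A : Matrix n n R) (x : n → R) :
    A.det • x = ∑ k, (A.updateRow k x).det • A k := by
  rw [← det_transpose, ← mulVec_cramer]
  ext l
  simp [mulVec, dotProduct, cramer_transpose_apply, mul_comm]

theorem det_updateRow_sum_smul {ι : Type*} (A : Matrix n n R) (i : n) (s : Finset ι)
    (c : ι → R) (z : ι → n → R) :
    (A.updateRow i (∑ k ∈ s, c k • z k)).det =
      ∑ k ∈ s, c k * (A.updateRow i (z k)).det := by
  have h := map_sum (detRowAlternating.toMultilinearMap.toLinearMap A i) (fun k => c k • z k) s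
  simp only [map_smul, smul_eq_mul] at h
  exact h

/-- The three-term Grassmann–Plücker relation, from expanding `A.det • x` by Cramer's rule. -/
theorem det_mul_det_updateRow_updateRow (A : Matrix n n R) {i j : n} (hij : i ≠ j)
    (x y : n → R) :
    A.det * ((A.updateRow i x).updateRow j y).det =
      (A.updateRow i x).det * (A.updateRow j y).det
        - (A.updateRow j x).det * (A.updateRow i y).det := by
  have hswap : ((A.updateRow j y).updateRow i (A j)).det = -(A.updateRow i y).det := by
    have : (A.updateRow i y).submatrix (Equiv.swap i j) id
        = (A.updateRow j y).updateRow i (A j) := by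
      ext k l
      rcases eq_or_ne k i with rfl | hki
      · simp [updateRow_apply, hij.symm]
      rcases eq_or_ne k j with rfl | hkj
      · simp [updateRow_apply, hki]
      · simp [Equiv.swap_apply_of_ne_of_ne hki hkj, updateRow_apply, hki, hkj]
    rw [← this, det_permute, Equiv.Perm.sign_swap hij]
    simp
  have hrepeat : ∀ k, k ≠ i ∧ k ≠ j → ((A.updateRow j y).updateRow i (A k)).det = 0 := by
    rintro k ⟨hki, hkj⟩
    exact det_zero_of_row_eq hki.symm (by simp [hki, hkj])
  have hself : (A.updateRow j y).updateRow i (A i) = A.updateRow j y := by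
    simpa [updateRow_ne hij] using updateRow_eq_self (A.updateRow j y) i
  calc A.det * ((A.updateRow i x).updateRow j y).det
      = ((A.updateRow j y).updateRow i (A.det • x)).det := by
        rw [updateRow_comm _ hij, det_updateRow_smul]
    _ = ∑ k, (A.updateRow k x).det * ((A.updateRow j y).updateRow i (A k)).det := by
        rw [det_smul_eq_sum_det_updateRow_smul, det_updateRow_sum_smul _ _ _ _ A]
    _ = _ := by
        rw [Fintype.sum_eq_add i j hij fun k hk => by rw [hrepeat k hk, mul_zero], hswap, hself]
        ring
theorem det_updateRow_smul_sub (A : Matrix n n R) (i : n) (a : R) (x y : n → R) :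
    (A.updateRow i (a • x - y)).det = a * (A.updateRow i x).det - (A.updateRow i y).det := by
  rw [sub_eq_add_neg, det_updateRow_add, det_updateRow_smul, ← neg_one_smul R y,
    det_updateRow_smul]
  ring

/-- The new row `i` is an exchange vector, of which `w1` is the instance with `det A = 1`. -/
theorem det_updateRow_exchange_updateRow (A : Matrix n n R) {i j : n} (hij : i ≠ j)
    (x y : n → R) :
    ((A.updateRow i ((A.updateRow i x).det • A i - A.det • x)).updateRow j y).det =
      (A.updateRow j x).det * (A.updateRow i y).det := by
  have hself : (A.updateRow j y).updateRow i (A i) = A.updateRow j y := by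
    simpa [updateRow_ne hij] using updateRow_eq_self (A.updateRow j y) i
  rw [updateRow_comm _ hij, sub_eq_add_neg, det_updateRow_add, ← neg_smul, det_updateRow_smul,
    det_updateRow_smul, hself, updateRow_comm _ hij.symm]
  linear_combination -det_mul_det_updateRow_updateRow A hij x y

theorem det_submatrix_mul_det (σ : Equiv.Perm n) (A B : Matrix n n R) :
    (A.submatrix σ id).det * B.det = A.det * (B.submatrix σ id).det := by
  rw [det_permute, det_permute]
  ring

end Matrix

open Matrix

theorem cdet_eq_det {m : ℕ} (u : Fin m → Fin m → ℂ) : cdet u = (Matrix.of u).det := by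
  rw [cdet, ← det_transpose]
  rfl

def consecutiveRows {m : ℕ} (v : ℕ → Fin m → ℂ) (j : ℕ) : Matrix (Fin m) (Fin m) ℂ :=
  Matrix.of fun t => v (j + t)

@[simp]
theorem consecutiveRows_apply {m : ℕ} (v : ℕ → Fin m → ℂ) (j : ℕ) (t l : Fin m) :
    consecutiveRows v j t l = v (j + t) l :=
  rfl

section

variable {n : ℕ} (v : ℕ → Fin (n + 2) → ℂ)

theorem of_vtr_eq_updateRow_updateRow :
    Matrix.of (fun t : Fin (n + 2) =>
        vtr (n + 2) v (if (t : ℕ) < n + 2 - 1 then (t : ℕ) + 2 else n + 2 + 2))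
      = ((consecutiveRows v 2).updateRow 0 (w1 (n + 2) v)).updateRow (Fin.last (n + 1))
          (wm1 (n + 2) v) := by
  ext t l
  rcases eq_or_ne t (Fin.last (n + 1)) with rfl | hlast
  · simp [vtr]
  rcases eq_or_ne t 0 with rfl | hzero
  · simp [vtr]
  have ht0 : (t : ℕ) ≠ 0 := Fin.val_ne_iff.mpr hzero
  have htl : (t : ℕ) < n + 1 := Fin.val_lt_last hlast
  rw [updateRow_ne hlast, updateRow_ne hzero, consecutiveRows_apply, of_apply, if_pos (by omega)]
  simp only [vtr]
  rw [if_neg (by omega), if_neg (by omega), if_neg (by omega), if_neg (by omega), add_comm]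

theorem cdet_w1_coeff_eq_det_updateRow :
    cdet (fun t : Fin (n + 2) => if (t : ℕ) = 0 then v 1 else v ((t : ℕ) + 2))
      = ((consecutiveRows v 2).updateRow 0 (v 1)).det := by
  rw [cdet_eq_det]
  congr 1
  ext t l
  rcases eq_or_ne t 0 with rfl | hzero
  · simp
  · have ht0 : (t : ℕ) ≠ 0 := Fin.val_ne_iff.mpr hzero
    rw [updateRow_ne hzero, of_apply, if_neg ht0, consecutiveRows_apply, add_comm]

theorem consecutiveRows_updateRow_last :
    (consecutiveRows v 2).updateRow (Fin.last (n + 1)) (v 1)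
      = (consecutiveRows v 1).submatrix (finRotate (n + 2)) id := by
  ext t l
  rcases eq_or_ne t (Fin.last (n + 1)) with rfl | hlast
  · simp
  · rw [updateRow_ne hlast, submatrix_apply, consecutiveRows_apply, consecutiveRows_apply,
      coe_finRotate_of_ne_last hlast, id]
    ring_nf

theorem consecutiveRows_updateRow_zero :
    ((consecutiveRows v 2).updateRow 0 (v (n + 2 + 2))).submatrix (finRotate (n + 2)) id
      = consecutiveRows v 3 := by
  ext t l
  rcases eq_or_ne t (Fin.last (n + 1)) with rfl | hlast
  · simp [add_comm 3]
  · have hrot := coe_finRotate_of_ne_last hlast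
    have hne : finRotate (n + 2) t ≠ 0 := Fin.val_ne_iff.mp (by rw [hrot]; simp)
    rw [submatrix_apply, updateRow_ne hne, consecutiveRows_apply, consecutiveRows_apply, hrot, id]
    ring_nf

end

/-- (Lemma 4.3(i), case B.)  With the configuration `v` and transformed
tuple `v′ = vtr m v` as above:  `Δ_ı(v′) = det(v_{m+1}, v_{m+3}, v_{m+4}, …, v_{2m+1})`
where `ı` has entry set `{2,…,m} ∪ {m+2}`. -/
theorem stmt_7 (m : ℕ) (hm : 2 ≤ m) (v : ℕ → Fin m → ℂ)
    (hv : ∀ j, 1 ≤ j → j ≤ m + 2 → cdet (fun t : Fin m => v (j + (t : ℕ))) = 1) :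
    cdet (fun t : Fin m => vtr m v (if (t : ℕ) < m - 1 then (t : ℕ) + 2 else m + 2))
      = cdet (fun t : Fin m => if (t : ℕ) = 0 then v (m + 1) else v (m + 2 + (t : ℕ))) := by
  obtain ⟨n, rfl⟩ : ∃ n, m = n + 2 := ⟨m - 2, by omega⟩
  have hdet (j : ℕ) (h1 : 1 ≤ j) (h2 : j ≤ n + 2 + 2) : (consecutiveRows v j).det = 1 :=
    (cdet_eq_det _).symm.trans (hv j h1 h2)
  set F := consecutiveRows v 2
  set L := Fin.last (n + 1)
  have hL : (0 : Fin (n + 2)) ≠ L := (Fin.last_pos).ne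
  have hw1 : w1 (n + 2) v = (F.updateRow 0 (v 1)).det • F 0 - F.det • v 1 := by
    rw [w1, cdet_w1_coeff_eq_det_updateRow, hdet 2 (by omega) (by omega), one_smul]
    rfl
  have hcross : (F.updateRow L (v 1)).det * (F.updateRow 0 (v (n + 2 + 2))).det = 1 := by
    rw [consecutiveRows_updateRow_last, det_submatrix_mul_det, consecutiveRows_updateRow_zero,
      hdet 1 le_rfl (by omega), hdet 3 (by omega) (by omega), one_mul]
  have hrepeat : (F.updateRow 0 (v (n + 2 + 1))).det = 0 :=
    det_zero_of_row_eq hL (by ext l; simp [F, L, hL.symm, add_comm 2])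
  rw [cdet_eq_det, of_vtr_eq_updateRow_updateRow, wm1, det_updateRow_smul_sub, hw1,
    det_updateRow_exchange_updateRow F hL, det_updateRow_exchange_updateRow F hL, hcross, hrepeat]
  ring
end

section
/- With the configuration (v_1, …, v_{2m+1}) and the transformed tuple (v′_1, …, v′_{2m}) as in the context, assume m ≥ 3 and let a ∈ {1, …, m−2}. Let ı be the strictly increasing m-tuple with entry set {m−a+1, …, m} ∪ {m+2, …, 2m+1−a} and let ı′ be the strictly increasing m-tuple with entry set {m−a+1, …, m+1} ∪ {m+3, …, 2m+1−a}. Then Δ_ı(v′) = det(v_{m+1}, v_{m+3}, v_{m+4}, …, v_{2m+1}) · Δ_ı(v) − Δ_{ı′}(v). -/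
/-!
Only the `a`-th column of `ı` sees the mutation: it is `v_{m+2}`, which `v′` replaces by
`w_{m+1} = c • v_{m+2} - v_{m+1}` with `c = det(v_{m+1}, v_{m+3}, …, v_{2m+1})`, while
every other column of `ı` avoids the positions `1, 2, m+1, m+2` that `v′` changes.
Expanding the determinant linearly in that column gives `c · Δ_ı(v) - Δ_{ı'}(v)`, since
putting `v_{m+1}` in column `a` of `ı` produces exactly `ı'`.
-/

theorem cdet_eq_detRowAlternating {m : ℕ} (u : Fin m → Fin m → ℂ) :
    cdet u = Matrix.detRowAlternating u := by
  rw [cdet, show (Matrix.of fun i j => u j i) = (Matrix.of u).transpose from rfl,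
    Matrix.det_transpose]
  rfl

theorem cdet_update_smul_sub {m : ℕ} (g : Fin m → Fin m → ℂ) (i : Fin m) (c : ℂ)
    (x y : Fin m → ℂ) :
    cdet (Function.update g i (c • x - y))
      = c * cdet (Function.update g i x) - cdet (Function.update g i y) := by
  simp only [cdet_eq_detRowAlternating, AlternatingMap.map_update_sub,
    AlternatingMap.map_update_smul, smul_eq_mul]

theorem vtr_of_ne {m k : ℕ} (v : ℕ → Fin m → ℂ) (h1 : k ≠ 1) (h2 : k ≠ 2) (h3 : k ≠ m + 1)
    (h4 : k ≠ m + 2) : vtr m v k = v k := by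
  simp [vtr, h1, h2, h3, h4]

theorem vtr_add_two {m : ℕ} (hm : m ≠ 0) (v : ℕ → Fin m → ℂ) : vtr m v (m + 2) = wm1 m v := by
  simp [vtr, hm]

/-- The `t`-th entry of `ı` (for `k = a`) and of `ı'` (for `k = a + 1`). -/
def blockIndex (m a k t : ℕ) : ℕ :=
  if t < k then m - a + 1 + t else m + 2 + (t - a)

section blockIndex

variable {m a t : ℕ}

theorem blockIndex_self : blockIndex m a a a = m + 2 := by
  simp [blockIndex]

theorem blockIndex_succ_self (ha : a ≤ m) : blockIndex m a (a + 1) a = m + 1 := by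
  simp only [blockIndex, lt_add_one, if_true]
  omega

theorem blockIndex_succ_of_ne (ht : t ≠ a) : blockIndex m a (a + 1) t = blockIndex m a a t := by
  simp only [blockIndex]
  split_ifs <;> omega

theorem vtr_blockIndex_of_ne (v : ℕ → Fin m → ℂ) (ha : a ≤ m - 2) (ht : t ≠ a) :
    vtr m v (blockIndex m a a t) = v (blockIndex m a a t) := by
  apply vtr_of_ne <;> simp only [blockIndex] <;> split_ifs <;> omega

end blockIndex

theorem stmt_8_general (m : ℕ) (hm : 3 ≤ m) (a : ℕ) (ha2 : a ≤ m - 2)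
    (v : ℕ → Fin m → ℂ) :
    cdet (fun t : Fin m =>
        vtr m v (if (t : ℕ) < a then m - a + 1 + (t : ℕ) else m + 2 + ((t : ℕ) - a)))
      = cdet (fun t : Fin m => if (t : ℕ) = 0 then v (m + 1) else v (m + 2 + (t : ℕ)))
          * cdet (fun t : Fin m =>
              v (if (t : ℕ) < a then m - a + 1 + (t : ℕ) else m + 2 + ((t : ℕ) - a)))
        - cdet (fun t : Fin m =>
            v (if (t : ℕ) < a + 1 then m - a + 1 + (t : ℕ) else m + 2 + ((t : ℕ) - a))) := by
  set i : Fin m := ⟨a, by omega⟩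
  set g : Fin m → Fin m → ℂ := fun t => v (blockIndex m a a t)
  have hvtr : (fun t : Fin m => vtr m v (blockIndex m a a t)) = Function.update g i (wm1 m v) :=
    Function.eq_update_iff.2 ⟨by simp [i, blockIndex_self, vtr_add_two (by omega : m ≠ 0)],
      fun t ht => vtr_blockIndex_of_ne v ha2 (Fin.val_ne_iff.2 ht)⟩
  have hg : Function.update g i (v (m + 2)) = g := by
    simp [g, i, blockIndex_self]
  have hı' :
      Function.update g i (v (m + 1)) = fun t : Fin m => v (blockIndex m a (a + 1) t) :=
    (Function.eq_update_iff.2 ⟨by simp [i, blockIndex_succ_self (by omega : a ≤ m)],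
      fun t ht => congrArg v (blockIndex_succ_of_ne (Fin.val_ne_iff.2 ht))⟩).symm
  change cdet (fun t : Fin m => vtr m v (blockIndex m a a t)) = _ * cdet g
    - cdet (fun t : Fin m => v (blockIndex m a (a + 1) t))
  rw [hvtr, wm1, cdet_update_smul_sub, hg, hı']

/-- (Lemma 4.3(i), case C.)  With the configuration `v` and transformed
tuple `v′ = vtr m v` as above, `m ≥ 3`, `1 ≤ a ≤ m−2`:
`Δ_ı(v′) = det(v_{m+1}, v_{m+3}, …, v_{2m+1}) · Δ_ı(v) − Δ_{ı′}(v)` where `ı` has entry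
set `{m−a+1,…,m} ∪ {m+2,…,2m+1−a}` and `ı′` has entry set
`{m−a+1,…,m+1} ∪ {m+3,…,2m+1−a}`. -/
theorem stmt_8 (m : ℕ) (hm : 3 ≤ m) (a : ℕ) (ha1 : 1 ≤ a) (ha2 : a ≤ m - 2)
    (v : ℕ → Fin m → ℂ)
    (hv : ∀ j, 1 ≤ j → j ≤ m + 2 → cdet (fun t : Fin m => v (j + (t : ℕ))) = 1) :
    cdet (fun t : Fin m =>
        vtr m v (if (t : ℕ) < a then m - a + 1 + (t : ℕ) else m + 2 + ((t : ℕ) - a)))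
      = cdet (fun t : Fin m => if (t : ℕ) = 0 then v (m + 1) else v (m + 2 + (t : ℕ)))
          * cdet (fun t : Fin m =>
              v (if (t : ℕ) < a then m - a + 1 + (t : ℕ) else m + 2 + ((t : ℕ) - a)))
        - cdet (fun t : Fin m =>
            v (if (t : ℕ) < a + 1 then m - a + 1 + (t : ℕ) else m + 2 + ((t : ℕ) - a))) :=
  stmt_8_general m hm a ha2 v
end

section
/- Let x = (x_k)_{k∈ℤ} ∈ B̂ with x_k = (a_k, b_k, c_k). Then for every k ∈ ℤ, (R_1(x))_k = (min(a_k, c_k), b_k + max(a_k − c_k, 0), b_{k−1} + max(c_{k−1} − a_{k−1}, 0)). -/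
/-- A triple `(a, b, c) ∈ ℕ³`, identified with the multisegment `a[2] + b[1,2] + c[1]`
of type `A₂`. -/
abbrev T3 := ℕ × ℕ × ℕ

/-- `f̃_1(a,b,c) := (a,b,c+1)` if `a ≤ c`, and `(a−1,b+1,c)` if `a > c`. -/
def ftil1 (x : T3) : T3 :=
  if x.1 ≤ x.2.2 then (x.1, x.2.1, x.2.2 + 1) else (x.1 - 1, x.2.1 + 1, x.2.2)

/-- `ẽ_1(a,b,c) := (a,b,c−1)` if `a < c`; `(a+1,b−1,c)` if `b > 0` and `a ≥ c`;
undefined if `b = 0` and `a ≥ c`. -/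
def etil1 (x : T3) : Option T3 :=
  if x.1 < x.2.2 then some (x.1, x.2.1, x.2.2 - 1)
  else if 0 < x.2.1 then some (x.1 + 1, x.2.1 - 1, x.2.2) else none

/-- `f̃_2(a,b,c) := (a+1,b,c)`. -/
def ftil2 (x : T3) : T3 := (x.1 + 1, x.2.1, x.2.2)

/-- `ẽ_2(a,b,c) := (a−1,b,c)` if `a > 0`, undefined if `a = 0`. -/
def etil2 (x : T3) : Option T3 :=
  if 0 < x.1 then some (x.1 - 1, x.2.1, x.2.2) else none

/-- `f̃*_1(a,b,c) := (a,b,c+1)`. -/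
def fstar1 (x : T3) : T3 := (x.1, x.2.1, x.2.2 + 1)

/-- `ẽ*_1(a,b,c) := (a,b,c−1)` if `c > 0`, undefined if `c = 0`. -/
def estar1 (x : T3) : Option T3 :=
  if 0 < x.2.2 then some (x.1, x.2.1, x.2.2 - 1) else none

/-- `f̃*_2(a,b,c) := (a+1,b,c)` if `a ≥ c`, and `(a,b+1,c−1)` if `a < c`. -/
def fstar2 (x : T3) : T3 :=
  if x.2.2 ≤ x.1 then (x.1 + 1, x.2.1, x.2.2) else (x.1, x.2.1 + 1, x.2.2 - 1)

/-- `ẽ*_2(a,b,c) := (a−1,b,c)` if `a > c`; `(a,b−1,c+1)` if `b > 0` and `a ≤ c`;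
undefined if `b = 0` and `a ≤ c`. -/
def estar2 (x : T3) : Option T3 :=
  if x.2.2 < x.1 then some (x.1 - 1, x.2.1, x.2.2)
  else if 0 < x.2.1 then some (x.1, x.2.1 - 1, x.2.2 + 1) else none

/-- `ε_1(a,b,c) := b + max(c−a, 0)`. -/
def eps1 (x : T3) : ℕ := x.2.1 + (x.2.2 - x.1)

/-- `ε_2(a,b,c) := a`. -/
def eps2 (x : T3) : ℕ := x.1

/-- `ε*_1(a,b,c) := c`. -/
def epsStar1 (x : T3) : ℕ := x.2.2

/-- `ε*_2(a,b,c) := b + max(a−c, 0)`. -/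
def epsStar2 (x : T3) : ℕ := x.2.1 + (x.1 - x.2.2)

/-- Iteration of a partially defined operator: `iterO f k x` is the result of applying
`f` to `x` `k` times in succession, defined exactly when every intermediate result is
defined. -/
def iterO (f : T3 → Option T3) : ℕ → T3 → Option T3
  | 0, x => some x
  | k + 1, x => (f x).bind (iterO f k)

/-- `φ*_1(a,b,c) := a − b − c` (as an integer). -/
def phiStar1 (x : T3) : ℤ := (x.1 : ℤ) - x.2.1 - x.2.2

/-- `φ*_2(a,b,c) := max(a−c, 0) + c − 2a` (as an integer). -/
def phiStar2 (x : T3) : ℤ := max ((x.1 : ℤ) - x.2.2) 0 + x.2.2 - 2 * x.1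

/-- The Saito reflection `S_1(x) := f̃_1^{φ*_1(x)}(ẽ*_1^{ε*_1(x)}(x))`, defined when all
intermediate applications are defined (in particular the exponent `φ*_1(x)` must be
nonnegative). -/
def saito1 (x : T3) : Option T3 :=
  if 0 ≤ phiStar1 x then (iterO estar1 (epsStar1 x) x).map (ftil1^[(phiStar1 x).toNat])
  else none

/-- The Saito reflection `S_2(x) := f̃_2^{φ*_2(x)}(ẽ*_2^{ε*_2(x)}(x))`, defined when all
intermediate applications are defined. -/
def saito2 (x : T3) : Option T3 :=
  if 0 ≤ phiStar2 x then (iterO estar2 (epsStar2 x) x).map (ftil2^[(phiStar2 x).toNat])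
  else none

/-- The modified Saito reflection `T̃_1(x) := S_1(ẽ_1^{ε_1(x)}(x))`. -/
def tsaito1 (x : T3) : Option T3 := (iterO etil1 (eps1 x) x).bind saito1

/-- The modified Saito reflection `T̃_2(x) := S_2(ẽ_2^{ε_2(x)}(x))`. -/
def tsaito2 (x : T3) : Option T3 := (iterO etil2 (eps2 x) x).bind saito2


/-!
On `x = (a, b, c)`, the operator `ẽ_1^{ε_1(x)}` first lowers `c` to `min(a, c)` and then
moves all of `b` into `a`, reaching `(a + b, 0, min(a, c))`.  There `S_1` strips off the
`c`-coordinate and `f̃_1^{φ*_1}` moves `a + b − min(a, c)` from the first coordinate to the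
second, so `T̃_1(x) = (min(a, c), b + (a − c), 0)`; finally `f̃*_1^{ε_1(x_{k−1})}` only
raises the last coordinate.
-/

lemma iterO_add (f : T3 → Option T3) (m n : ℕ) (x : T3) :
    iterO f (m + n) x = (iterO f m x).bind (iterO f n) := by
  induction m generalizing x with
  | zero => simp [iterO]
  | succ m ih =>
    rw [Nat.add_right_comm]
    cases hf : f x <;> simp [iterO, hf, ih]

lemma iterO_etil1_lower (n a b : ℕ) : iterO etil1 n (a, b, a + n) = some (a, b, a) := by
  induction n with
  | zero => rfl
  | succ n ih =>
    have hstep : etil1 (a, b, a + (n + 1)) = some (a, b, a + n) := by simp [etil1]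
    simp [iterO, hstep, ih]

lemma iterO_etil1_transfer (n a c : ℕ) (h : c ≤ a) :
    iterO etil1 n (a, n, c) = some (a + n, 0, c) := by
  induction n generalizing a with
  | zero => rfl
  | succ n ih =>
    have hstep : etil1 (a, n + 1, c) = some (a + 1, n, c) := by
      simp [etil1, Nat.not_lt.mpr h]
    simp [iterO, hstep, ih (a + 1) (by omega), Nat.add_right_comm, Nat.add_assoc]

lemma iterO_etil1_eps1 (a b c : ℕ) :
    iterO etil1 (eps1 (a, b, c)) (a, b, c) = some (a + b, 0, min a c) := by
  rcases le_or_gt a c with h | h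
  · obtain ⟨d, rfl⟩ := Nat.exists_eq_add_of_le h
    rw [eps1, add_comm, iterO_add]
    simp [iterO_etil1_lower, iterO_etil1_transfer]
  · simp [eps1, Nat.sub_eq_zero_of_le h.le, iterO_etil1_transfer b a c h.le, min_eq_right h.le]

lemma iterO_estar1 (n a b : ℕ) : iterO estar1 n (a, b, n) = some (a, b, 0) := by
  induction n with
  | zero => rfl
  | succ n ih => simp [iterO, estar1, ih]

lemma ftil1_iterate (t A B : ℕ) (h : t ≤ A) : ftil1^[t] (A, B, 0) = (A - t, B + t, 0) := by
  induction t with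
  | zero => simp
  | succ t ih =>
    rw [Function.iterate_succ_apply', ih (by omega)]
    simp [ftil1, Nat.sub_ne_zero_of_lt h, Nat.sub_sub, Nat.add_assoc]

lemma fstar1_iterate (m : ℕ) (p : T3) : fstar1^[m] p = (p.1, p.2.1, p.2.2 + m) := by
  induction m with
  | zero => rfl
  | succ m ih => simp [Function.iterate_succ_apply', ih, fstar1, Nat.add_assoc]

lemma saito1_of_le (A m : ℕ) (h : m ≤ A) : saito1 (A, 0, m) = some (m, A - m, 0) := by
  have hphi : phiStar1 (A, 0, m) = ((A - m : ℕ) : ℤ) := by simp [phiStar1]; omega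
  rw [saito1, hphi, if_pos (Int.natCast_nonneg _), epsStar1, iterO_estar1, Option.map_some,
    Int.toNat_natCast, ftil1_iterate _ _ _ (Nat.sub_le A m), Nat.sub_sub_self h, zero_add]

lemma tsaito1_apply (a b c : ℕ) : tsaito1 (a, b, c) = some (min a c, b + (a - c), 0) := by
  rw [tsaito1, iterO_etil1_eps1, Option.bind_some,
    saito1_of_le _ _ ((min_le_left a c).trans (Nat.le_add_right a b))]
  congr 3
  omega

theorem stmt_16_general (x : ℤ → T3) (k : ℤ) :
    (tsaito1 (x k)).map (fstar1^[eps1 (x (k - 1))]) =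
      some (min (x k).1 (x k).2.2,
        (x k).2.1 + ((x k).1 - (x k).2.2),
        (x (k - 1)).2.1 + ((x (k - 1)).2.2 - (x (k - 1)).1)) := by
  rw [tsaito1_apply, Option.map_some, fstar1_iterate, eps1, zero_add]

/-- Let `x = (x_k)_{k∈ℤ}` be an element of the extended crystal `B̂`
(a finitely supported sequence in `ℕ³`, `x_k = (a_k, b_k, c_k)`).  Then for every `k`,
`(R_1(x))_k = f̃*_1^{ε_1(x_{k−1})}(T̃_1(x_k))
            = (min(a_k, c_k), b_k + max(a_k − c_k, 0), b_{k−1} + max(c_{k−1} − a_{k−1}, 0))`. -/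
theorem stmt_16 (x : ℤ → T3) (hx : {k : ℤ | x k ≠ (0, 0, 0)}.Finite) (k : ℤ) :
    (tsaito1 (x k)).map (fstar1^[eps1 (x (k - 1))]) =
      some (min (x k).1 (x k).2.2,
        (x k).2.1 + ((x k).1 - (x k).2.2),
        (x (k - 1)).2.1 + ((x (k - 1)).2.2 - (x (k - 1)).1)) :=
  stmt_16_general x k
end

section
/- Let x = (x_k)_{k∈ℤ} ∈ B̂ with x_k = (a_k, b_k, c_k). Then for every k ∈ ℤ, (R_2(x))_k = (a_{k−1} + c_k − min(a_{k−1}, b_k), min(a_{k−1}, b_k), b_k + c_k − min(a_{k−1}, b_k)). -/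
/-! `ẽ_2` empties the `a`-coordinate, after which `ẽ*_2` moves `b` into `c` and `f̃_2` refills
`a` by `φ*_2 = c`, so `T̃_2(a,b,c) = (c, 0, b + c)` regardless of `a`. Applying `f̃*_2` to
`(c, 0, b + c)` first transfers from the third coordinate to the second as long as the third
exceeds the first, i.e. `min(n, b)` times, and then increases the first coordinate. -/

lemma iterO_etil2_self (a b c : ℕ) : iterO etil2 a (a, b, c) = some (0, b, c) := by
  induction a with
  | zero => rfl
  | succ a ih => simpa [iterO, etil2] using ih

lemma iterO_estar2_of_fst_eq_zero (b c : ℕ) : iterO estar2 b (0, b, c) = some (0, 0, c + b) := by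
  induction b generalizing c with
  | zero => rfl
  | succ b ih => simpa [iterO, estar2, Nat.add_assoc, Nat.add_comm 1 b] using ih (c + 1)

lemma ftil2_iterate (n a b c : ℕ) : ftil2^[n] (a, b, c) = (a + n, b, c) := by
  induction n with
  | zero => rfl
  | succ n ih => rw [Function.iterate_succ_apply', ih, ftil2, Nat.add_assoc]

lemma tsaito2_apply (a b c : ℕ) : tsaito2 (a, b, c) = some (c, 0, c + b) := by
  have hphi : phiStar2 ((0 : ℕ), b, c) = c := by simp [phiStar2]
  rw [tsaito2, eps2, iterO_etil2_self, Option.bind_some, saito2, hphi,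
    if_pos (Int.natCast_nonneg c), epsStar2]
  simp [iterO_estar2_of_fst_eq_zero, ftil2_iterate]

lemma fstar2_iterate_of_le (n : ℕ) {a c : ℕ} (b : ℕ) (h : c ≤ a) :
    fstar2^[n] (a, b, c) = (a + n, b, c) := by
  induction n with
  | zero => rfl
  | succ n ih =>
    rw [Function.iterate_succ_apply', ih, fstar2, if_pos (by simp only; omega), Nat.add_assoc]

lemma fstar2_iterate_of_le_sub {n m : ℕ} (a b : ℕ) (h : n ≤ m) :
    fstar2^[n] (a, b, a + m) = (a, b + n, a + m - n) := by
  induction n with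
  | zero => rfl
  | succ n ih =>
    rw [Function.iterate_succ_apply', ih (by omega), fstar2, if_neg (by simp only; omega)]
    ext <;> simp only <;> omega

lemma fstar2_iterate_tsaito2 (n b c : ℕ) :
    fstar2^[n] (c, 0, c + b) = (n + c - min n b, min n b, b + c - min n b) := by
  rcases le_total n b with h | h
  · rw [fstar2_iterate_of_le_sub c 0 h]
    ext <;> simp only <;> omega
  · obtain ⟨d, rfl⟩ := Nat.exists_eq_add_of_le h
    rw [Nat.add_comm b d, Function.iterate_add_apply, fstar2_iterate_of_le_sub c 0 le_rfl,
      fstar2_iterate_of_le d _ (by omega)]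
    ext <;> simp only <;> omega

theorem stmt_17_general (x : ℤ → T3) (k : ℤ) :
    (tsaito2 (x k)).map (fstar2^[eps2 (x (k - 1))]) =
      some ((x (k - 1)).1 + (x k).2.2 - min (x (k - 1)).1 (x k).2.1,
        min (x (k - 1)).1 (x k).2.1,
        (x k).2.1 + (x k).2.2 - min (x (k - 1)).1 (x k).2.1) := by
  obtain ⟨a, b, c⟩ := x k
  rw [tsaito2_apply, Option.map_some, eps2, fstar2_iterate_tsaito2]

/-- Let `x = (x_k)_{k∈ℤ}` be an element of the extended crystal `B̂`
(a finitely supported sequence in `ℕ³`, `x_k = (a_k, b_k, c_k)`).  Then for every `k`,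
`(R_2(x))_k = f̃*_2^{ε_2(x_{k−1})}(T̃_2(x_k))
            = (a_{k−1} + c_k − min(a_{k−1}, b_k), min(a_{k−1}, b_k),
               b_k + c_k − min(a_{k−1}, b_k))`. -/
theorem stmt_17 (x : ℤ → T3) (hx : {k : ℤ | x k ≠ (0, 0, 0)}.Finite) (k : ℤ) :
    (tsaito2 (x k)).map (fstar2^[eps2 (x (k - 1))]) =
      some ((x (k - 1)).1 + (x k).2.2 - min (x (k - 1)).1 (x k).2.1,
        min (x (k - 1)).1 (x k).2.1,
        (x k).2.1 + (x k).2.2 - min (x (k - 1)).1 (x k).2.1) :=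
  stmt_17_general x k
end
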